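/- Whipple's transformation for balanced terminating ₄F₃ series: if n is a nonnegative integer and a + b + c + 1 - n = d + e + f (balance condition), then Σ_{i=0}^{n} (-n)_i (a)_i (b)_i (c)_i / (i! (d)_i (e)_i (f)_i) = [(e-a)_n (f-a)_n / ((e)_n (f)_n)] · Σ_{i=0}^{n} (-n)_i (a)_i (d-b)_i (d-c)_i / (i! (d)_i (e-b-c+d)_i (f-b-c+d)_i). -/

import Mathlib

noncomputable def poch (x : ℝ) (n : ℕ) : ℝ := ∏ i ∈ Finset.range n, (x + i)

/-!
Whipple's transformation reduces to the Pfaff–Saalschütz summation, used twice. In product form,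
`(b)_i (c)_i = ∑_j C(i,j) (d-b)_j (d-c)_j (d+j)_{i-j} (b+c-d)_{i-j}`, it expands the left-hand
side into a double sum. After exchanging the order of summation, the inner sum is a terminating
₃F₂ that is balanced because the ₄F₃ is, so Saalschütz evaluates it in closed form. The
reflection `(1-x-k)_k = (-1)^k (x)_k` then turns that closed form into the prefactor and the new
denominators `(e-b-c+d)_j (f-b-c+d)_j`. Saalschütz itself is proved with its denominators cleared,
by induction on the length, through a telescoping (Zeilberger) recurrence.
-/

open Finset

section Pochhammer

variable (x : ℝ)

lemma poch_zero : poch x 0 = 1 := by simp [poch]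

lemma poch_succ_right (n : ℕ) : poch x (n + 1) = poch x n * (x + n) :=
  prod_range_succ _ n

lemma poch_add (m k : ℕ) : poch x (m + k) = poch x m * poch (x + m) k := by
  simp only [poch, prod_range_add, Nat.cast_add, add_assoc]

lemma poch_succ_left {x y : ℝ} (h : x + 1 = y) (n : ℕ) : poch x (n + 1) = x * poch y n := by
  rw [add_comm n, poch_add, ← h]; simp [poch]

lemma poch_eq_mul_poch_of_le {m : ℕ} (k : ℕ) (hk : k ≤ m) :
    poch x m = poch x k * poch (x + k) (m - k) := by
  rw [← poch_add, Nat.add_sub_cancel' hk]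

lemma poch_ne_zero_of_le {m k : ℕ} (h : poch x m ≠ 0) (hk : k ≤ m) : poch x k ≠ 0 :=
  left_ne_zero_of_mul (poch_eq_mul_poch_of_le x k hk ▸ h)

lemma poch_add_ne_zero_of_le {m k : ℕ} (h : poch x m ≠ 0) (hk : k ≤ m) :
    poch (x + k) (m - k) ≠ 0 :=
  right_ne_zero_of_mul (poch_eq_mul_poch_of_le x k hk ▸ h)

lemma poch_one_sub_sub (k : ℕ) : poch (1 - x - k) k = (-1) ^ k * poch x k := by
  induction k generalizing x with
  | zero => simp [poch_zero]
  | succ k ih =>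
    rw [poch_succ_left (y := 1 - x - k) (by push_cast; ring), ih, poch_succ_right]
    push_cast; ring

lemma poch_neg_natCast {m k : ℕ} (hk : k ≤ m) :
    poch (-(m : ℝ)) k = (-1) ^ k * m.choose k * k.factorial := by
  induction k with
  | zero => simp [poch_zero]
  | succ k ih =>
    have h := congrArg (Nat.cast (R := ℝ)) (Nat.choose_succ_right_eq m k)
    push_cast [Nat.cast_sub (Nat.le_of_succ_le hk)] at h
    rw [poch_succ_right, ih (Nat.le_of_succ_le hk), Nat.factorial_succ]
    push_cast
    linear_combination (-1) ^ k * (k.factorial : ℝ) * h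

end Pochhammer

section Saalschutz

variable (x y z w : ℝ)

/-- The `j`-th term of `₃F₂(-m, x, y; z, w; 1)` multiplied by `(z)_m (w)_m`, using
`(-m)_j / j! = (-1)^j C(m,j)`; it vanishes for `j > m`. -/
noncomputable def saalschutzTerm (m j : ℕ) : ℝ :=
  (-1) ^ j * m.choose j * poch x j * poch y j * poch (z + j) (m - j) * poch (w + j) (m - j)

/-- The certificate against which `saalschutzTerm` telescopes when `m` grows by one. -/
noncomputable def saalschutzCert (m : ℕ) : ℕ → ℝ
  | 0 => 0
  | j + 1 => (x + j) * (y + j) * saalschutzTerm x y z w m j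

lemma saalschutzTerm_of_lt {m j : ℕ} (h : m < j) : saalschutzTerm x y z w m j = 0 := by
  simp [saalschutzTerm, Nat.choose_eq_zero_of_lt h]

lemma saalschutzTerm_succ_of_pos_of_le {i k : ℕ}
    (hbal : x + y + 1 = z + w + (i + k + 1 + 1 : ℕ)) :
    saalschutzTerm x y z w (i + k + 1 + 1) (i + 1)
        + (z - x + (i + k + 1 : ℕ)) * (z - y + (i + k + 1 : ℕ))
          * saalschutzTerm x y z (w + 1) (i + k + 1) (i + 1)
      = saalschutzCert x y z (w + 1) (i + k + 1) (i + 2)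
        - saalschutzCert x y z (w + 1) (i + k + 1) (i + 1) := by
  have hbin := congrArg (Nat.cast (R := ℝ)) (Nat.choose_succ_right_eq (i + k + 1) i)
  rw [show i + k + 1 - i = k + 1 by omega] at hbin
  simp only [saalschutzTerm, saalschutzCert, show i + k + 1 + 1 - (i + 1) = k + 1 by omega,
    show i + k + 1 - (i + 1) = k by omega, show i + k + 1 - i = k + 1 by omega,
    Nat.choose_succ_succ' (i + k + 1) i, poch_succ_right x i, poch_succ_right y i,
    poch_succ_right (z + (i + 1 : ℕ)) k,
    poch_succ_left (show z + i + 1 = z + (i + 1 : ℕ) by push_cast; ring),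
    poch_succ_left (show w + (i + 1 : ℕ) + 1 = w + 1 + (i + 1 : ℕ) by push_cast; ring),
    poch_succ_left (show w + 1 + i + 1 = w + 1 + (i + 1 : ℕ) by push_cast; ring)]
  push_cast at hbin hbal ⊢
  -- after factoring out the common product, this is `C(m, i+1) (i+1) = C(m, i) (m-i)`
  linear_combination (-1) ^ i * poch x i * poch y i * (x + i) * (y + i) * poch (z + (i + 1)) k
    * poch (w + 1 + (i + 1)) k * ((w + (i + 1)) * hbin
      + ((i + k + 1).choose (i + 1) : ℝ) * (z + (i + k + 1) + (i + 1)) * hbal)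

lemma saalschutzTerm_succ {m j : ℕ} (hbal : x + y + 1 = z + w + (m + 1 : ℕ))
    (hj : j ≤ m + 1) :
    saalschutzTerm x y z w (m + 1) j
        + (z - x + m) * (z - y + m) * saalschutzTerm x y z (w + 1) m j
      = saalschutzCert x y z (w + 1) m (j + 1) - saalschutzCert x y z (w + 1) m j := by
  rcases j with _ | i
  · simp only [saalschutzTerm, saalschutzCert, poch_zero, Nat.choose_zero_right, Nat.sub_zero,
      Nat.cast_zero, pow_zero, add_zero, poch_succ_right z m,
      poch_succ_left (rfl : w + 1 = w + 1)]
    push_cast at hbal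
    linear_combination poch z m * poch (w + 1) m * (-(z + m) * hbal)
  rcases Nat.lt_or_eq_of_le hj with hi | hi
  · obtain ⟨k, rfl⟩ := Nat.exists_eq_add_of_lt (Nat.lt_of_succ_lt_succ hi)
    exact saalschutzTerm_succ_of_pos_of_le x y z w hbal
  · obtain rfl : i = m := Nat.succ_injective hi
    simp only [saalschutzCert, saalschutzTerm_of_lt x y z _ (Nat.lt_succ_self i)]
    simp only [saalschutzTerm, Nat.choose_self, Nat.sub_self, poch_zero, poch_succ_right x i,
      poch_succ_right y i]
    ring

theorem sum_saalschutzTerm (m : ℕ) (hbal : x + y + 1 = z + w + m) :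
    ∑ j ∈ range (m + 1), saalschutzTerm x y z w m j
      = (-1) ^ m * poch (z - x) m * poch (z - y) m := by
  induction m generalizing w with
  | zero => simp [saalschutzTerm, poch_zero]
  | succ m ih =>
    have htel := sum_congr rfl fun j hj =>
      saalschutzTerm_succ x y z w hbal (Nat.lt_succ_iff.mp (mem_range.mp hj))
    rw [sum_add_distrib, ← mul_sum, sum_range_succ (saalschutzTerm x y z (w + 1) m),
      saalschutzTerm_of_lt x y z _ (Nat.lt_succ_self m), add_zero,
      ih (w + 1) (by push_cast at hbal; linarith),
      sum_range_sub (saalschutzCert x y z (w + 1) m)] at htel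
    simp only [saalschutzCert, saalschutzTerm_of_lt x y z _ (Nat.lt_succ_self m)] at htel
    rw [poch_succ_right, poch_succ_right]
    linear_combination htel

end Saalschutz

theorem saalschutz {x y z w : ℝ} {m : ℕ} (hbal : x + y + 1 = z + w + m)
    (hz : poch z m ≠ 0) (hw : poch w m ≠ 0) :
    ∑ k ∈ range (m + 1), poch (-(m : ℝ)) k * poch x k * poch y k /
        (k.factorial * poch z k * poch w k)
      = (-1) ^ m * poch (z - x) m * poch (z - y) m / (poch z m * poch w m) := by
  rw [← sum_saalschutzTerm x y z w m hbal, sum_div]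
  refine sum_congr rfl fun k hk => ?_
  have hkm := Nat.lt_succ_iff.mp (mem_range.mp hk)
  have := poch_ne_zero_of_le z hz hkm
  have := poch_ne_zero_of_le w hw hkm
  have := poch_add_ne_zero_of_le z hz hkm
  have := poch_add_ne_zero_of_le w hw hkm
  rw [poch_neg_natCast hkm, saalschutzTerm, poch_eq_mul_poch_of_le z k hkm,
    poch_eq_mul_poch_of_le w k hkm]
  field_simp

theorem poch_mul_poch_eq_sum (b c d : ℝ) (i : ℕ) :
    poch b i * poch c i
      = ∑ j ∈ range (i + 1), (i.choose j : ℝ) * poch (d - b) j * poch (d - c) j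
          * poch (d + j) (i - j) * poch (b + c - d) (i - j) := by
  have h := sum_saalschutzTerm (d - b) (d - c) d (1 - (b + c - d) - i) i (by ring)
  have hterm : ∀ j ∈ range (i + 1), saalschutzTerm (d - b) (d - c) d (1 - (b + c - d) - i) i j
      = (-1) ^ i * ((i.choose j : ℝ) * poch (d - b) j * poch (d - c) j
        * poch (d + j) (i - j) * poch (b + c - d) (i - j)) := by
    intro j hj
    have hji := Nat.lt_succ_iff.mp (mem_range.mp hj)
    rw [saalschutzTerm, show 1 - (b + c - d) - i + j = 1 - (b + c - d) - (i - j : ℕ) by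
      push_cast [Nat.cast_sub hji]; ring, poch_one_sub_sub,
      show (-1 : ℝ) ^ i = (-1) ^ j * (-1) ^ (i - j) by rw [← pow_add, Nat.add_sub_cancel' hji]]
    ring
  rw [sum_congr rfl hterm, ← mul_sum, sub_sub_cancel, sub_sub_cancel, mul_assoc] at h
  exact (mul_left_cancel₀ (pow_ne_zero i (by norm_num)) h).symm

lemma sum_range_sum_range_succ_comm {M : Type*} [AddCommMonoid M] (N : ℕ)
    (g : ℕ → ℕ → M) :
    ∑ i ∈ range N, ∑ j ∈ range (i + 1), g i j
      = ∑ j ∈ range N, ∑ k ∈ range (N - j), g (j + k) j := by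
  rw [sum_comm' (t' := range N) (s' := fun j => Ico j N) (fun i j => by simp; omega)]
  exact sum_congr rfl fun j _ => sum_Ico_eq_sum_range _ _ _

lemma poch_mul_poch_one_sub_mul_poch_one_sub (u v : ℝ) (j k : ℕ) :
    (-1) ^ k * poch u k * poch (1 - v - k) k * poch (1 - v - (j + k : ℕ)) j
        * poch (1 - u - (j + k : ℕ)) j
      = poch u (j + k) * poch v (j + k) := by
  have hv : poch (1 - v - (j + k : ℕ)) j * poch (1 - v - k) k
      = (-1) ^ (j + k) * poch v (j + k) := by
    rw [← poch_one_sub_sub, poch_add]; congr 2; push_cast; ring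
  have hu : poch (1 - u - (j + k : ℕ)) j = (-1) ^ j * poch (u + k) j := by
    rw [← poch_one_sub_sub]; congr 1; push_cast; ring
  have hsign : ((-1 : ℝ) ^ (j + k)) ^ 2 = 1 := by
    rw [← pow_mul]; exact Even.neg_one_pow ⟨j + k, by ring⟩
  rw [hu, add_comm j k, poch_add u k j, add_comm k j]
  linear_combination (-1) ^ (j + k) * poch u k * poch (u + k) j * hv
    + poch u k * poch (u + k) j * poch v (j + k) * hsign

lemma summand_add_eq_mul_summand {N a p q s d e f : ℝ} {j k : ℕ} (hd : poch d (j + k) ≠ 0)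
    (he : poch e (j + k) ≠ 0) (hf : poch f (j + k) ≠ 0) :
    poch N (j + k) * poch a (j + k)
        * ((j + k).choose j * poch p j * poch q j * poch (d + j) k * poch s k)
        / ((j + k).factorial * poch d (j + k) * poch e (j + k) * poch f (j + k))
      = poch N j * poch a j * poch p j * poch q j
          / (j.factorial * poch d j * poch e j * poch f j)
        * (poch (N + j) k * poch (a + j) k * poch s k
          / (k.factorial * poch (e + j) k * poch (f + j) k)) := by
  have hfac : ((j + k).factorial : ℝ) = (j + k).choose j * j.factorial * k.factorial := by
    rw [Nat.choose_symm_add]; exact_mod_cast (Nat.add_choose_mul_factorial_mul_factorial j k).symm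
  obtain ⟨hd₁, hd₂⟩ := mul_ne_zero_iff.mp (poch_add d j k ▸ hd)
  obtain ⟨he₁, he₂⟩ := mul_ne_zero_iff.mp (poch_add e j k ▸ he)
  obtain ⟨hf₁, hf₂⟩ := mul_ne_zero_iff.mp (poch_add f j k ▸ hf)
  have hchoose : ((j + k).choose j : ℝ) ≠ 0 := by exact_mod_cast (Nat.choose_pos (by omega)).ne'
  rw [poch_add N, poch_add a, poch_add d, poch_add e, poch_add f, hfac]
  field_simp

theorem whipple_expand {n : ℕ} {a b c d e f : ℝ} (hd : poch d n ≠ 0)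
    (he : poch e n ≠ 0) (hf : poch f n ≠ 0) :
    ∑ i ∈ range (n + 1), poch (-(n : ℝ)) i * poch a i * poch b i * poch c i
        / (i.factorial * poch d i * poch e i * poch f i)
      = ∑ j ∈ range (n + 1), poch (-(n : ℝ)) j * poch a j * poch (d - b) j * poch (d - c) j
          / (j.factorial * poch d j * poch e j * poch f j)
        * ∑ k ∈ range (n - j + 1), poch (-((n - j : ℕ) : ℝ)) k * poch (a + j) k
            * poch (b + c - d) k / (k.factorial * poch (e + j) k * poch (f + j) k) := by
  simp only [mul_assoc _ (poch b _), poch_mul_poch_eq_sum b c d, mul_sum, sum_div]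
  rw [sum_range_sum_range_succ_comm]
  refine sum_congr rfl fun j hj => ?_
  have hjn := Nat.lt_succ_iff.mp (mem_range.mp hj)
  rw [show n + 1 - j = n - j + 1 by omega]
  refine sum_congr rfl fun k hk => ?_
  have hjk : j + k ≤ n := by have := mem_range.mp hk; omega
  rw [Nat.add_sub_cancel_left, summand_add_eq_mul_summand (poch_ne_zero_of_le d hd hjk)
    (poch_ne_zero_of_le e he hjk) (poch_ne_zero_of_le f hf hjk),
    show -(n : ℝ) + j = -((n - j : ℕ) : ℝ) by push_cast [Nat.cast_sub hjn]; ring]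

lemma whipple_inner_eval {n j : ℕ} {a b c d e f : ℝ} (hbal : a + b + c + 1 - n = d + e + f)
    (hj : j ≤ n) (he : poch e n ≠ 0) (hf : poch f n ≠ 0) (he' : poch (e - b - c + d) j ≠ 0)
    (hf' : poch (f - b - c + d) j ≠ 0) :
    poch (-(n : ℝ)) j * poch a j * poch (d - b) j * poch (d - c) j
          / (j.factorial * poch d j * poch e j * poch f j)
        * ∑ k ∈ range (n - j + 1), poch (-((n - j : ℕ) : ℝ)) k * poch (a + j) k
            * poch (b + c - d) k / (k.factorial * poch (e + j) k * poch (f + j) k)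
      = poch (e - a) n * poch (f - a) n / (poch e n * poch f n)
        * (poch (-(n : ℝ)) j * poch a j * poch (d - b) j * poch (d - c) j
          / (j.factorial * poch d j * poch (e - b - c + d) j * poch (f - b - c + d) j)) := by
  obtain ⟨k, rfl⟩ := Nat.exists_eq_add_of_le hj
  obtain ⟨he₁, he₂⟩ := mul_ne_zero_iff.mp (poch_add e j k ▸ he)
  obtain ⟨hf₁, hf₂⟩ := mul_ne_zero_iff.mp (poch_add f j k ▸ hf)
  have hbal' : a + j + (b + c - d) + 1 = e + j + (f + j) + k := by push_cast at hbal; linarith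
  have he'' : e - b - c + d = 1 - (f - a) - (j + k : ℕ) := by linarith
  have hf'' : f - b - c + d = 1 - (e - a) - (j + k : ℕ) := by linarith
  have hkey := poch_mul_poch_one_sub_mul_poch_one_sub (e - a) (f - a) j k
  rw [Nat.add_sub_cancel_left, saalschutz hbal' he₂ hf₂, poch_add e j k, poch_add f j k,
    show e + j - (a + j) = e - a by ring,
    show e + j - (b + c - d) = 1 - (f - a) - k by push_cast at he''; linarith, he'', hf'']
  rw [he''] at he'
  rw [hf''] at hf'
  field_simp
  linear_combination poch (-((j + k : ℕ) : ℝ)) j * poch a j * poch (d - b) j * poch (d - c) j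
    / poch d j * hkey

/-- Whipple's transformation for balanced terminating ₄F₃ series. -/
theorem stmt13 (n : ℕ) (a b c d e f : ℝ)
    (hbal : a + b + c + 1 - n = d + e + f)
    (hd : ∀ i ≤ n, poch d i ≠ 0) (he : ∀ i ≤ n, poch e i ≠ 0)
    (hf : ∀ i ≤ n, poch f i ≠ 0)
    (he' : ∀ i ≤ n, poch (e - b - c + d) i ≠ 0)
    (hf' : ∀ i ≤ n, poch (f - b - c + d) i ≠ 0) :
    ∑ i ∈ Finset.range (n + 1),
      poch (-(n : ℝ)) i * poch a i * poch b i * poch c i /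
        ((Nat.factorial i : ℝ) * poch d i * poch e i * poch f i)
    = (poch (e - a) n * poch (f - a) n / (poch e n * poch f n)) *
      ∑ i ∈ Finset.range (n + 1),
        poch (-(n : ℝ)) i * poch a i * poch (d - b) i * poch (d - c) i /
          ((Nat.factorial i : ℝ) * poch d i * poch (e - b - c + d) i *
            poch (f - b - c + d) i) := by
  rw [whipple_expand (hd n le_rfl) (he n le_rfl) (hf n le_rfl), mul_sum]
  refine sum_congr rfl fun j hj => ?_
  have hjn := Nat.lt_succ_iff.mp (mem_range.mp hj)
  exact whipple_inner_eval hbal hjn (he n le_rfl) (hf n le_rfl) (he' j hjn) (hf' j hjn)
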